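/- Let π be a k-colored permutation of length n, colored with colors from 1 through k, and let (P, Q) = (P(π), Q(π)) be the pair of tableaux obtained from π by the k-ribbon insertion algorithm. Then color(π) = spin(P, Q). -/

import Mathlib

namespace KRF

/-- A letter of the alphabet `{1_1, …, 1_k, 2}`:  `one j` stands for the letter `1_j`
(with `1 ≤ j ≤ k` for genuine letters), and `two` stands for the letter `2`. -/
inductive Letter (k : ℕ) : Type where
  | one : ℕ → Letter k
  | two : Letter k
deriving DecidableEq

/-- A word over the alphabet `{1_1, …, 1_k, 2}`, listed from the leftmost letter to the
rightmost letter. -/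
abbrev Word (k : ℕ) := List (Letter k)

/-- The contribution of a letter to the rank: each `1_j` counts `1` and each `2` counts `2`. -/
def Letter.rank {k : ℕ} : Letter k → ℕ
  | .one _ => 1
  | .two => 2

/-- The rank of a word: the sum of its letters. -/
def Word.rank {k : ℕ} (w : Word k) : ℕ := (w.map Letter.rank).sum

/-- The letter `1_j` is valid when `1 ≤ j ≤ k`. -/
def Letter.Valid (k : ℕ) : Letter k → Prop
  | .one j => 1 ≤ j ∧ j ≤ k
  | .two => True

/-- A genuine word of the Fibonacci poset `Z(k)`: all of its letters are valid. -/
def Word.Valid (k : ℕ) (w : Word k) : Prop := ∀ l ∈ w, l.Valid k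

/-- The cover relation of the Fibonacci poset `Z(k)`:  `z` is covered by `w` iff `z` is
obtained from `w` either by changing a `2` into some `1_j` when all letters to the left of
that `2` are `2`'s, or by deleting the leftmost letter of the form `1_j`. -/
def ZCovers (k : ℕ) (z w : Word k) : Prop :=
  (∃ (p s : Word k) (j : ℕ), (∀ l ∈ p, l = Letter.two) ∧ 1 ≤ j ∧ j ≤ k ∧
      w = p ++ Letter.two :: s ∧ z = p ++ Letter.one j :: s) ∨
  (∃ (p s : Word k) (j : ℕ), (∀ l ∈ p, l = Letter.two) ∧ 1 ≤ j ∧ j ≤ k ∧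
      w = p ++ Letter.one j :: s ∧ z = p ++ s)

/-- `c 0 ⋖ c 1 ⋖ ⋯ ⋖ c n` is a saturated chain in `Z(k)` starting at the empty word. -/
def IsZChain (k n : ℕ) (c : ℕ → Word k) : Prop :=
  c 0 = [] ∧ ∀ i, i < n → ZCovers k (c i) (c (i + 1))

end KRF
namespace KRF

/-- A column of a (tiled and filled) `k`-ribbon Fibonacci tableau.
`single h v` is a column of height 1 (shape letter `1_h`) tiled by one `k`-ribbon of
height `h` filled with the value `v`.
`double ht hb vt vb` is a column of height 2 (shape letter `2`) tiled by a `k`-ribbon of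
height `ht` filled with `vt` stacked on top of a `k`-ribbon of height `hb` (always
`hb = k + 1 - ht` for genuine tableaux) filled with `vb`. -/
inductive Col (k : ℕ) : Type where
  | single : ℕ → ℕ → Col k
  | double : ℕ → ℕ → ℕ → ℕ → Col k
deriving DecidableEq

/-- A (tiled, filled) `k`-ribbon Fibonacci tableau: its list of columns, from the leftmost
column to the rightmost one. -/
abbrev Tab (k : ℕ) := List (Col k)

/-- The shape letter of a column. -/
def Col.shape {k : ℕ} : Col k → Letter k
  | .single h _ => Letter.one h
  | .double _ _ _ _ => Letter.two

/-- The `k`-ribbon Fibonacci shape (a word) underlying a tableau. -/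
def Tab.shape {k : ℕ} (T : Tab k) : Word k := T.map Col.shape

/-- The value in the bottom `k`-ribbon of a column. -/
def Col.bottomVal {k : ℕ} : Col k → ℕ
  | .single _ v => v
  | .double _ _ _ vb => vb

/-- The heights occurring in a column are genuine ribbon heights: between `1` and `k`,
and in a column of height 2 the two heights sum to `k + 1`. -/
def Col.HeightsValid (k : ℕ) : Col k → Prop
  | .single h _ => 1 ≤ h ∧ h ≤ k
  | .double ht hb _ _ => 1 ≤ ht ∧ ht ≤ k ∧ hb = k + 1 - ht

/-- The list of all entries of a tableau (one for each `k`-ribbon). -/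
def Tab.entries {k : ℕ} (T : Tab k) : List ℕ :=
  (T.map fun c => match c with
    | Col.single _ v => [v]
    | Col.double _ _ vt vb => [vt, vb]).flatten

/-- The list of the bottom-ribbon values of the columns of a tableau. -/
def Tab.bottoms {k : ℕ} (T : Tab k) : List ℕ := T.map Col.bottomVal

/-- `T` is a standard `k`-ribbon Fibonacci tableau with entries `1, …, n`:
heights are valid, the entries are exactly `1, …, n`,  and the tableau can be built by
placing `n, n-1, …, 1` in order, each new `k`-ribbon being either appended (as a new
rightmost height-1 column) to the shape formed by the `k`-ribbons containing larger
entries, or stacked on top of a single such `k`-ribbon.  Equivalently (and this is how we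
formalize it): the bottom entries strictly decrease from left to right (in particular the
`k`-ribbon containing the leftmost square of the bottom row contains `n`), and in each
column of height 2 the top entry is smaller than the bottom entry. -/
def IsStandardTab (k n : ℕ) (T : Tab k) : Prop :=
  (∀ c ∈ T, Col.HeightsValid k c) ∧
  (Tab.entries T).Perm (List.range' 1 n) ∧
  List.Chain' (fun a b => b < a) (Tab.bottoms T) ∧
  (∀ c ∈ T, ∀ ht hb vt vb, c = Col.double ht hb vt vb → vt < vb)

/-- Updating a (partial) path tableau along one cover step `z ⋖ w` of `Z(k)`, placing the
value `i` in the `k` new squares of `w` relative to `z`:  if `w` is obtained from `z` by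
inserting a letter `1_j` after the prefix of `2`'s, a new height-1 column with a single
ribbon of height `j` filled with `i` is created there; if `w` is obtained from `z` by
changing the letter `1_h` just after the prefix of `2`'s into a `2`, the `k` new squares
of that column form a `k`-ribbon of height `k + 1 - h` filled with `i`, stacked on top of
the already present `k`-ribbon of height `h`. -/
def updateTab (k : ℕ) (i : ℕ) : Word k → Word k → Tab k → Tab k
  | Letter.two :: z', Letter.two :: w', c :: T => c :: updateTab k i z' w' T
  | Letter.one h :: _, Letter.two :: _, Col.single _ v :: T =>
      Col.double (k + 1 - h) h i v :: T
  | z, Letter.one j :: w', T => if z = w' then Col.single j i :: T else T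
  | _, _, T => T

/-- The `k`-ribbon Fibonacci path tableau determined by a saturated chain in `Z(k)`:
for each `i = 1, …, n` the value `i` is placed in the `k` new squares of `c i` relative
to `c (i-1)`. -/
def chainTab (k : ℕ) (c : ℕ → Word k) : ℕ → Tab k
  | 0 => []
  | m + 1 => updateTab k (m + 1) (c m) (c (m + 1)) (chainTab k c m)

/-- `T` is a `k`-ribbon Fibonacci path tableau with entries `1, …, n`: it is obtained
from some saturated chain `∅ = c 0 ⋖ c 1 ⋖ ⋯ ⋖ c n` in `Z(k)` by placing `i`'s in the
`k` new squares created at the `i`-th step. -/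
def IsPathTab (k n : ℕ) (T : Tab k) : Prop :=
  ∃ c : ℕ → Word k, IsZChain k n c ∧ T = chainTab k c n

end KRF
namespace KRF

/-- A `k`-colored permutation of length `n`: a permutation `x_1 x_2 ⋯ x_n` of `{1, …, n}`
(here `x_i = perm i + 1`, using `Fin n` positions and values) together with a color
`color i ∈ {1, …, k}` attached to each entry. -/
structure ColoredPerm (n k : ℕ) : Type where
  perm : Equiv.Perm (Fin n)
  color : Fin n → ℕ
  color_pos : ∀ i, 1 ≤ color i
  color_le : ∀ i, color i ≤ k

/-- Insertion of a value `x` of color `j` into a `k`-ribbon Fibonacci tableau: compare `x`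
with the value `t` in the `k`-ribbon containing the leftmost square of the bottom row.
If the tableau is empty or `x > t`, a new leftmost height-1 column consisting of a single
`k`-ribbon of height `j` filled with `x` is created.  If `x < t`, a `k`-ribbon of height
`j` filled with `x` is placed on top of the `k`-ribbon containing `t` (which is forced to
become a `k`-ribbon of height `k + 1 - j`); if a `k`-ribbon of height `l` filled with `b`
was already on top of the ribbon containing `t`, it is bumped out and the value `b` with
color `l` is inserted recursively into the tableau formed by the columns to the right. -/
def insertVal (k : ℕ) (x j : ℕ) : Tab k → Tab k
  | [] => [Col.single j x]
  | c :: rest =>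
    if Col.bottomVal c < x then Col.single j x :: c :: rest
    else
      match c with
      | Col.single _ v => Col.double j (k + 1 - j) x v :: rest
      | Col.double ht _ vt vb => Col.double j (k + 1 - j) x vb :: insertVal k vt ht rest

/-- The insertion tableau obtained after inserting the first `i` colored entries
`x_1^{j_1}, …, x_i^{j_i}` of the `k`-colored permutation `π` into the empty tableau. -/
def PPartial (k n : ℕ) (π : ColoredPerm n k) (i : ℕ) : Tab k :=
  ((List.finRange n).take i).foldl
    (fun T m => insertVal k ((π.perm m : ℕ) + 1) (π.color m) T) []

/-- The insertion tableau `P(π)` of a `k`-colored permutation. -/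
def PTab (k n : ℕ) (π : ColoredPerm n k) : Tab k := PPartial k n π n

/-- The chain of shapes of the partial insertion tableaux of `π`. -/
def QChain (k n : ℕ) (π : ColoredPerm n k) (i : ℕ) : Word k :=
  Tab.shape (PPartial k n π i)

/-- The recording tableau `Q(π)`: it has the same shape as `P(π)`, and after the `i`-th
insertion the value `i` is placed in the `k` squares by which the shape grew at step `i`. -/
def QTab (k n : ℕ) (π : ColoredPerm n k) : Tab k := chainTab k (QChain k n π) n

end KRF
namespace KRF

/-- `vert` of a column: the sum of `(height − 1)` over its `k`-ribbons. -/
def Col.vert {k : ℕ} : Col k → ℕ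
  | .single h _ => h - 1
  | .double ht hb _ _ => (ht - 1) + (hb - 1)

/-- `vert(T)`: the sum of `(j − 1)` over all `k`-ribbons of `T`, where `j` is the height
of the `k`-ribbon. -/
def Tab.vert {k : ℕ} (T : Tab k) : ℕ := (T.map Col.vert).sum

/-- `split_c` of a column: `k − j₁` if the column has height 2 with top ribbon of height
`j₁`, and `0` for a column of height 1.  `split(T)` is the sum over all columns. -/
def Tab.split (k : ℕ) (T : Tab k) : ℕ :=
  (T.map fun c => match c with
    | Col.double ht _ _ _ => k - ht
    | Col.single _ _ => 0).sum

/-- `color(π) = Σᵢ (jᵢ − 1)` where `jᵢ` is the color of the entry in position `i`. -/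
def colorStat {n k : ℕ} (π : ColoredPerm n k) : ℕ := ∑ i : Fin n, (π.color i - 1)

end KRF
namespace KRF

/-! Spin is a sum of contributions of the columns of `P` paired with those of `Q`, and each
insertion of a ribbon of color `j` raises it by exactly `j − 1`. The recording tableau grows in
the column where the insertion stops. Along the bumping path, replacing a top ribbon of height
`ht` by one of height `j` shifts that column's contribution by `j − ht`, and the recursive
insertion of the bumped ribbon (of color `ht`) contributes `ht − 1`. At the last column the
shape grows, by a new column or by stacking, and the contribution changes by `j − 1` directly.
Summing over the insertion steps gives `color(π)`. -/

def Col.split (k : ℕ) : Col k → ℕ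
  | .double ht _ _ _ => k - ht
  | .single _ _ => 0

def Col.spin (k : ℕ) (c d : Col k) : ℚ :=
  ((c.vert : ℚ) + (d.vert : ℚ)) / 2 + ((d.split k : ℚ) - (c.split k : ℚ))

def Tab.spin (k : ℕ) (P Q : Tab k) : ℚ :=
  ((Tab.vert P : ℚ) + (Tab.vert Q : ℚ)) / 2 + ((Tab.split k Q : ℚ) - (Tab.split k P : ℚ))

section Statistics

variable {k : ℕ}

@[simp]
lemma Tab.shape_cons (c : Col k) (T : Tab k) : Tab.shape (c :: T) = c.shape :: Tab.shape T :=
  rfl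

lemma Tab.vert_cons (c : Col k) (T : Tab k) : Tab.vert (c :: T) = c.vert + Tab.vert T :=
  List.sum_cons

lemma Tab.split_cons (c : Col k) (T : Tab k) :
    Tab.split k (c :: T) = c.split k + Tab.split k T := by
  cases c <;> simp [Tab.split, Col.split]

@[simp]
lemma Tab.spin_nil : Tab.spin k [] [] = 0 := by
  simp [Tab.spin, Tab.vert, Tab.split]

lemma Tab.spin_cons (c d : Col k) (P Q : Tab k) :
    Tab.spin k (c :: P) (d :: Q) = Col.spin k c d + Tab.spin k P Q := by
  simp only [Tab.spin, Col.spin, Tab.vert_cons, Tab.split_cons]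
  push_cast
  ring

lemma Col.spin_single {h : ℕ} (v w : ℕ) (hh : 1 ≤ h) :
    Col.spin k (.single h v) (.single h w) = (h : ℚ) - 1 := by
  simp [Col.spin, Col.vert, Col.split, Nat.cast_sub hh]

lemma Col.spin_double_left {j : ℕ} (x v : ℕ) (d : Col k) (hj : 1 ≤ j) (hjk : j ≤ k) :
    Col.spin k (.double j (k + 1 - j) x v) d
      = ((k : ℚ) - 1 + d.vert) / 2 + d.split k - (k - j) := by
  have hvert : j - 1 + (k + 1 - j - 1) = k - 1 := by omega
  simp only [Col.spin, Col.vert, Col.split, hvert]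
  push_cast [Nat.cast_sub hjk, Nat.cast_sub (hj.trans hjk)]
  ring

lemma Col.spin_double {j h : ℕ} (x v i w : ℕ) (hj : 1 ≤ j) (hjk : j ≤ k) (hh : 1 ≤ h)
    (hhk : h ≤ k) :
    Col.spin k (.double j (k + 1 - j) x v) (.double (k + 1 - h) h i w) = (h : ℚ) + j - 2 := by
  have hvert : k + 1 - h - 1 + (h - 1) = k - 1 := by omega
  have hsplit : k - (k + 1 - h) = h - 1 := by omega
  rw [Col.spin_double_left x v _ hj hjk]
  simp only [Col.vert, Col.split, hvert, hsplit]
  push_cast [Nat.cast_sub hh, Nat.cast_sub (hh.trans hhk)]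
  ring

end Statistics

section Insertion

variable {k : ℕ}

lemma updateTab_one (i j : ℕ) (z : Word k) (T : Tab k) :
    updateTab k i z (Letter.one j :: z) T = Col.single j i :: T := by
  match z, T with
  | [], T => simp [updateTab]
  | Letter.one h :: z', [] => simp [updateTab]
  | Letter.one h :: z', c :: T => simp [updateTab]
  | Letter.two :: z', [] => simp [updateTab]
  | Letter.two :: z', c :: T => simp [updateTab]

lemma updateTab_top (i h h' w : ℕ) (z : Word k) (Q : Tab k) :
    updateTab k i (Letter.one h :: z) (Letter.two :: z) (Col.single h' w :: Q)
      = Col.double (k + 1 - h) h i w :: Q := by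
  simp [updateTab]

lemma updateTab_two (i : ℕ) (z w : Word k) (c : Col k) (Q : Tab k) :
    updateTab k i (Letter.two :: z) (Letter.two :: w) (c :: Q)
      = c :: updateTab k i z w Q := by
  simp [updateTab]

lemma insertVal_of_lt {x : ℕ} (j : ℕ) {c : Col k} (T : Tab k) (h : c.bottomVal < x) :
    insertVal k x j (c :: T) = Col.single j x :: c :: T := by
  simp [insertVal, h]

lemma insertVal_single_of_le {x h v : ℕ} (j : ℕ) (T : Tab k) (hx : x ≤ v) :
    insertVal k x j (Col.single h v :: T) = Col.double j (k + 1 - j) x v :: T := by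
  simp [insertVal, Col.bottomVal, not_lt.2 hx]

lemma insertVal_double_of_le {x ht hb vt vb : ℕ} (j : ℕ) (T : Tab k) (hx : x ≤ vb) :
    insertVal k x j (Col.double ht hb vt vb :: T)
      = Col.double j (k + 1 - j) x vb :: insertVal k vt ht T := by
  simp [insertVal, Col.bottomVal, not_lt.2 hx]

lemma heightsValid_insertVal {x j : ℕ} {T : Tab k} (hT : ∀ c ∈ T, c.HeightsValid k)
    (hj : 1 ≤ j) (hjk : j ≤ k) : ∀ c ∈ insertVal k x j T, c.HeightsValid k := by
  induction T generalizing x j with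
  | nil => simpa [insertVal, Col.HeightsValid] using ⟨hj, hjk⟩
  | cons c T ih =>
    obtain ⟨hc, hrest⟩ := List.forall_mem_cons.1 hT
    by_cases hx : c.bottomVal < x
    · rw [insertVal_of_lt j T hx, List.forall_mem_cons, List.forall_mem_cons]
      exact ⟨⟨hj, hjk⟩, hc, hrest⟩
    · cases c with
      | single h v =>
        rw [insertVal_single_of_le (v := v) j T (not_lt.1 hx), List.forall_mem_cons]
        exact ⟨⟨hj, hjk, rfl⟩, hrest⟩
      | double ht hb vt vb =>
        rw [insertVal_double_of_le (vb := vb) j T (not_lt.1 hx), List.forall_mem_cons]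
        exact ⟨⟨hj, hjk, rfl⟩, ih hrest hc.1 hc.2.1⟩

lemma shape_updateTab_insertVal (i x j : ℕ) {T Q : Tab k} (hQ : Q.shape = T.shape) :
    (updateTab k i T.shape (insertVal k x j T).shape Q).shape = (insertVal k x j T).shape := by
  induction T generalizing Q x j with
  | nil =>
    obtain rfl : Q = [] := List.map_eq_nil_iff.1 hQ
    simp [insertVal, Col.shape, updateTab_one]
  | cons c T ih =>
    by_cases hx : c.bottomVal < x
    · simp [insertVal_of_lt j T hx, Col.shape, updateTab_one, hQ]
    obtain ⟨d, Q, rfl, hd, hQT⟩ := List.map_eq_cons_iff.1 hQ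
    clear hQ
    rcases c with ⟨h, v⟩ | ⟨ht, hb, vt, vb⟩ <;> rcases d with ⟨h', w⟩ | ⟨_, _, _, _⟩ <;>
      simp only [Col.shape, reduceCtorEq, Letter.one.injEq] at hd
    · rw [insertVal_single_of_le (v := v) j T (not_lt.1 hx)]
      simp only [Tab.shape_cons, Col.shape, updateTab_top]
      exact congrArg _ hQT
    · rw [insertVal_double_of_le (vb := vb) j T (not_lt.1 hx)]
      simp [Col.shape, updateTab_two, ih vt ht hQT]

lemma spin_insertVal (i : ℕ) {x j : ℕ} {T Q : Tab k} (hT : ∀ c ∈ T, c.HeightsValid k)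
    (hQ : Q.shape = T.shape) (hj : 1 ≤ j) (hjk : j ≤ k) :
    Tab.spin k (insertVal k x j T) (updateTab k i T.shape (insertVal k x j T).shape Q)
      = Tab.spin k T Q + (j - 1) := by
  induction T generalizing Q x j with
  | nil =>
    obtain rfl : Q = [] := List.map_eq_nil_iff.1 hQ
    simp [insertVal, Col.shape, updateTab_one, Tab.spin_cons, Col.spin_single _ _ hj]
  | cons c T ih =>
    by_cases hx : c.bottomVal < x
    · simp only [insertVal_of_lt j T hx, Tab.shape_cons, Col.shape, updateTab_one]
      rw [Tab.spin_cons, Col.spin_single _ _ hj]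
      ring
    obtain ⟨hc, hrest⟩ := List.forall_mem_cons.1 hT
    obtain ⟨d, Q, rfl, hd, hQT⟩ := List.map_eq_cons_iff.1 hQ
    clear hQ
    rcases c with ⟨h, v⟩ | ⟨ht, hb, vt, vb⟩ <;> rcases d with ⟨h', w⟩ | ⟨_, _, _, _⟩ <;>
      simp only [Col.shape, reduceCtorEq, Letter.one.injEq] at hd
    · subst hd
      rw [insertVal_single_of_le (v := v) j T (not_lt.1 hx)]
      simp only [Tab.shape_cons, Col.shape, updateTab_top]
      rw [Tab.spin_cons, Tab.spin_cons, Col.spin_double _ _ _ _ hj hjk hc.1 hc.2,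
        Col.spin_single _ _ hc.1]
      ring
    · obtain ⟨hht, hhtk, rfl⟩ := hc
      rw [insertVal_double_of_le (vb := vb) j T (not_lt.1 hx)]
      simp only [Tab.shape_cons, Col.shape, updateTab_two]
      rw [Tab.spin_cons, Tab.spin_cons, ih hrest hQT hht hhtk, Col.spin_double_left _ _ _ hj hjk,
        Col.spin_double_left _ _ _ hht hhtk]
      ring

end Insertion

section InsertionSequence

variable {k : ℕ} {P : ℕ → Tab k} {x j : ℕ → ℕ}

lemma heightsValid_insertion_seq (n : ℕ) (h0 : P 0 = [])
    (hstep : ∀ m < n, P (m + 1) = insertVal k (x m) (j m) (P m))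
    (hj : ∀ m < n, 1 ≤ j m ∧ j m ≤ k) : ∀ c ∈ P n, c.HeightsValid k := by
  induction n with
  | zero => simp [h0]
  | succ n ih =>
    rw [hstep n n.lt_succ_self]
    exact heightsValid_insertVal
      (ih (fun m hm => hstep m (by omega)) (fun m hm => hj m (by omega)))
      (hj n n.lt_succ_self).1 (hj n n.lt_succ_self).2

lemma shape_chainTab_insertion_seq (n : ℕ) (h0 : P 0 = [])
    (hstep : ∀ m < n, P (m + 1) = insertVal k (x m) (j m) (P m)) :
    (chainTab k (fun m => (P m).shape) n).shape = (P n).shape := by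
  induction n with
  | zero => simp [chainTab, h0, Tab.shape]
  | succ n ih =>
    rw [chainTab, hstep n n.lt_succ_self]
    exact shape_updateTab_insertVal _ _ _ (ih fun m hm => hstep m (by omega))

lemma spin_chainTab_insertion_seq (n : ℕ) (h0 : P 0 = [])
    (hstep : ∀ m < n, P (m + 1) = insertVal k (x m) (j m) (P m))
    (hj : ∀ m < n, 1 ≤ j m ∧ j m ≤ k) :
    Tab.spin k (P n) (chainTab k (fun m => (P m).shape) n)
      = ∑ m ∈ Finset.range n, ((j m : ℚ) - 1) := by
  induction n with
  | zero => simp [chainTab, h0]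
  | succ n ih =>
    have hstep' : ∀ m < n, P (m + 1) = insertVal k (x m) (j m) (P m) :=
      fun m hm => hstep m (by omega)
    have hj' : ∀ m < n, 1 ≤ j m ∧ j m ≤ k := fun m hm => hj m (by omega)
    rw [Finset.sum_range_succ, chainTab, hstep n n.lt_succ_self,
      spin_insertVal _ (heightsValid_insertion_seq n h0 hstep' hj')
        (shape_chainTab_insertion_seq n h0 hstep') (hj n n.lt_succ_self).1 (hj n n.lt_succ_self).2,
      ih hstep' hj']

end InsertionSequence

lemma PPartial_succ {k n : ℕ} (π : ColoredPerm n k) {m : ℕ} (hm : m < n) :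
    PPartial k n π (m + 1)
      = insertVal k ((π.perm ⟨m, hm⟩ : ℕ) + 1) (π.color ⟨m, hm⟩) (PPartial k n π m) := by
  simp [PPartial, List.take_add_one, hm]

theorem color_eq_spin_general (k n : ℕ) (π : ColoredPerm n k) :
    (colorStat π : ℚ) =
      ((Tab.vert (PTab k n π) : ℚ) + (Tab.vert (QTab k n π) : ℚ)) / 2 +
        ((Tab.split k (QTab k n π) : ℚ) - (Tab.split k (PTab k n π) : ℚ)) := by
  let x : ℕ → ℕ := fun m => if hm : m < n then (π.perm ⟨m, hm⟩ : ℕ) + 1 else 0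
  let j : ℕ → ℕ := fun m => if hm : m < n then π.color ⟨m, hm⟩ else 1
  have hstep : ∀ m < n, PPartial k n π (m + 1) = insertVal k (x m) (j m) (PPartial k n π m) :=
    fun m hm => by simpa only [x, j, dif_pos hm] using PPartial_succ π hm
  have hj : ∀ m < n, 1 ≤ j m ∧ j m ≤ k :=
    fun m hm => by simpa only [j, dif_pos hm] using ⟨π.color_pos _, π.color_le _⟩
  have hcolor : (colorStat π : ℚ) = ∑ m ∈ Finset.range n, ((j m : ℚ) - 1) := by
    rw [Finset.sum_range]
    simp [colorStat, j, Nat.cast_sub (π.color_pos _)]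
  rw [hcolor]
  exact (spin_chainTab_insertion_seq n rfl hstep hj).symm

/-- **color-to-spin.**  Let `π` be a `k`-colored permutation of length `n`
(colored with colors `1, …, k`) and let `(P, Q) = (P(π), Q(π))` be the pair of tableaux
obtained by the `k`-ribbon insertion algorithm.  Then
`color(π) = spin(P,Q) = (1/2)·(vert P + vert Q) + (split Q − split P)`. -/
theorem color_eq_spin (k n : ℕ) (hk : 1 ≤ k) (π : ColoredPerm n k) :
    (colorStat π : ℚ) =
      ((Tab.vert (PTab k n π) : ℚ) + (Tab.vert (QTab k n π) : ℚ)) / 2 +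
        ((Tab.split k (QTab k n π) : ℚ) - (Tab.split k (PTab k n π) : ℚ)) :=
  color_eq_spin_general k n π

end KRF
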